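/- arXiv:1601.02263 — 3 statements merged into one kernel-verified Lean document; each statement's English description precedes it below -/
import Mathlib

section
/- Suppose f is an even analytic function on a simply connected domain D containing 0, μ ∈ ℂ, and the sequences of analytic functions A_s, B_s on D are defined by A_0 = 1, 2B_s(z) = −A_s'(z) + ∫_0^z (f(t)A_s(t) − ((2μ+1)/t) A_s'(t)) dt, and 2A_{s+1}(z) = ((2μ+1)/z) B_s(z) − B_s'(z) + ∫ f(z)B_s(z) dz with A_{s+1}(0) = 0. Then for every s ≥ 0, A_s is an even function and B_s is an odd function on D. -/
/-!
Evenness and oddness propagate through the recursion because differentiation swaps them: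
on a symmetric, open, preconnected domain containing `0`, a differentiable function whose
derivative is odd is even, and one whose derivative is even and which vanishes at `0` is odd
(`z ↦ F (-z)` has the same derivative as `F`, resp. `-F`, and agrees with it at `0`).
If `A_s` is even, the differentiated equation for `B_s` makes `B_s'` even away from `0`, and
`B_s(0) = -A_s'(0)/2 = 0`, so `B_s` is odd. If `B_s` is odd, then `P' = f B_s` is odd, so `P`
is even, and every term of the equation for `A_{s+1}` is even.
-/

open Filter Topology

def EvenOn {α β : Type*} [Neg α] (F : α → β) (D : Set α) : Prop :=
  ∀ z ∈ D, F (-z) = F z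

def OddOn {α β : Type*} [Neg α] [Neg β] (F : α → β) (D : Set α) : Prop :=
  ∀ z ∈ D, F (-z) = -F z

section Parity

variable {𝕜 E : Type*} [NontriviallyNormedField 𝕜] [NormedAddCommGroup E] [NormedSpace 𝕜 E]
  {D : Set 𝕜} {F : 𝕜 → E}

theorem IsOpen.deriv_oddOn_of_evenOn (hD : IsOpen D) (hF : EvenOn F D) :
    OddOn (deriv F) D := by
  intro z hz
  have hev : (fun w ↦ F (-w)) =ᶠ[𝓝 z] F := eventually_of_mem (hD.mem_nhds hz) hF
  have h := hev.deriv_eq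
  rw [deriv_comp_neg] at h
  rw [← h, neg_neg]

theorem IsOpen.deriv_evenOn_of_oddOn (hD : IsOpen D) (hF : OddOn F D) :
    EvenOn (deriv F) D := by
  intro z hz
  have hev : (fun w ↦ F (-w)) =ᶠ[𝓝 z] (fun w ↦ -F w) := eventually_of_mem (hD.mem_nhds hz) hF
  have h := hev.deriv_eq
  rw [deriv_comp_neg, deriv.fun_neg, neg_inj] at h
  exact h

end Parity

section ParityOfDeriv

variable {𝕜 E : Type*} [RCLike 𝕜] [NormedAddCommGroup E] [NormedSpace 𝕜 E]
  {D : Set 𝕜} {F : 𝕜 → E}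

theorem IsOpen.evenOn_of_deriv_oddOn (hD : IsOpen D) (hDc : IsPreconnected D) (hD0 : 0 ∈ D)
    (hDsymm : ∀ z ∈ D, -z ∈ D) (hF : DifferentiableOn 𝕜 F D) (hF' : OddOn (deriv F) D) :
    EvenOn F D := fun z hz ↦
  hD.eqOn_of_deriv_eq (f := fun w ↦ F (-w)) hDc (hF.comp differentiable_neg.differentiableOn hDsymm) hF
    (fun w hw ↦ by rw [deriv_comp_neg, hF' w hw, neg_neg]) hD0 (by rw [neg_zero]) hz

theorem IsOpen.oddOn_of_deriv_evenOn (hD : IsOpen D) (hDc : IsPreconnected D) (hD0 : 0 ∈ D)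
    (hDsymm : ∀ z ∈ D, -z ∈ D) (hF : DifferentiableOn 𝕜 F D) (hF' : EvenOn (deriv F) D)
    (hF0 : F 0 = 0) : OddOn F D := fun z hz ↦
  hD.eqOn_of_deriv_eq (f := fun w ↦ F (-w)) (g := fun w ↦ -F w) hDc (hF.comp differentiable_neg.differentiableOn hDsymm) hF.neg
    (fun w hw ↦ by rw [deriv_comp_neg, deriv.fun_neg, hF' w hw]) hD0
    (by rw [neg_zero, hF0, neg_zero]) hz

end ParityOfDeriv

section OlverRecursion

variable {D : Set ℂ} {f A B P : ℂ → ℂ} {c : ℂ}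

theorem oddOn_of_olver_B_equation (hD : IsOpen D) (hDc : IsPreconnected D) (hD0 : 0 ∈ D)
    (hDsymm : ∀ z ∈ D, -z ∈ D) (hf : EvenOn f D) (hA : EvenOn A D)
    (hB : DifferentiableOn ℂ B D)
    (hrec : ∀ z ∈ D, z ≠ 0 →
      2 * deriv B z = -(deriv (deriv A) z) + f z * A z - (c / z) * deriv A z)
    (hrec0 : 2 * B 0 = -(deriv A 0)) : OddOn B D := by
  have hA' := hD.deriv_oddOn_of_evenOn hA
  have hA'' := hD.deriv_evenOn_of_oddOn hA'
  have hB' : EvenOn (deriv B) D := by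
    intro z hz
    rcases eq_or_ne z 0 with rfl | hz0
    · rw [neg_zero]
    · have h := hrec (-z) (hDsymm z hz) (neg_ne_zero.2 hz0)
      rw [hA'' z hz, hf z hz, hA z hz, hA' z hz, div_neg, neg_mul_neg, ← hrec z hz hz0] at h
      exact mul_left_cancel₀ two_ne_zero h
  have hB0 : B 0 = 0 := by
    have hA'0 : deriv A 0 = 0 := self_eq_neg.mp (by simpa using hA' 0 hD0)
    simpa [hA'0] using hrec0
  exact hD.oddOn_of_deriv_evenOn hDc hD0 hDsymm hB hB' hB0

theorem evenOn_of_olver_A_equation (hD : IsOpen D) (hDc : IsPreconnected D) (hD0 : 0 ∈ D)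
    (hDsymm : ∀ z ∈ D, -z ∈ D) (hf : EvenOn f D) (hB : OddOn B D)
    (hP : DifferentiableOn ℂ P D) (hP' : ∀ z ∈ D, deriv P z = f z * B z)
    (hrec : ∀ z ∈ D, z ≠ 0 → 2 * A z = (c / z) * B z - deriv B z + P z) : EvenOn A D := by
  have hPodd' : OddOn (deriv P) D := fun z hz ↦ by
    rw [hP' z hz, hP' (-z) (hDsymm z hz), hf z hz, hB z hz, mul_neg]
  have hPeven := hD.evenOn_of_deriv_oddOn hDc hD0 hDsymm hP hPodd'
  have hB' := hD.deriv_evenOn_of_oddOn hB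
  intro z hz
  rcases eq_or_ne z 0 with rfl | hz0
  · rw [neg_zero]
  · have h := hrec (-z) (hDsymm z hz) (neg_ne_zero.2 hz0)
    rw [hB z hz, hB' z hz, hPeven z hz, div_neg, neg_mul_neg, ← hrec z hz hz0] at h
    exact mul_left_cancel₀ two_ne_zero h

end OlverRecursion

theorem olver_recursion_even_odd_general (D : Set ℂ) (f : ℂ → ℂ) (μ : ℂ)
    (A B : ℕ → ℂ → ℂ)
    (hD : IsOpen D) (hDconn : IsPreconnected D)
    (hD0 : (0 : ℂ) ∈ D) (hDsymm : ∀ z ∈ D, -z ∈ D)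
    (hfe : ∀ z ∈ D, f (-z) = f z)
    (hBanal : ∀ s, AnalyticOnNhd ℂ (B s) D)
    (hA0 : ∀ z, A 0 z = 1)
    (hrecB : ∀ s, ∀ z ∈ D, z ≠ 0 →
      2 * deriv (B s) z =
        -(deriv (deriv (A s)) z) + f z * A s z - ((2 * μ + 1) / z) * deriv (A s) z)
    (hrecB0 : ∀ s, 2 * B s 0 = -(deriv (A s) 0))
    (hrecA : ∀ s, ∃ P : ℂ → ℂ, AnalyticOnNhd ℂ P D ∧ P 0 = 0 ∧
      (∀ z ∈ D, deriv P z = f z * B s z) ∧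
      ∀ z ∈ D, z ≠ 0 →
        2 * A (s + 1) z = ((2 * μ + 1) / z) * B s z - deriv (B s) z + P z) :
    ∀ s, (∀ z ∈ D, A s (-z) = A s z) ∧ (∀ z ∈ D, B s (-z) = -(B s z)) := by
  have hBodd : ∀ s, EvenOn (A s) D → OddOn (B s) D := fun s hA ↦
    oddOn_of_olver_B_equation hD hDconn hD0 hDsymm hfe hA (hBanal s).differentiableOn
      (hrecB s) (hrecB0 s)
  have hAeven : ∀ s, EvenOn (A s) D := by
    intro s
    induction s with
    | zero => exact fun z _ ↦ by rw [hA0, hA0]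
    | succ s ih =>
      obtain ⟨P, hP, -, hP', hrec⟩ := hrecA s
      exact evenOn_of_olver_A_equation hD hDconn hD0 hDsymm hfe (hBodd s ih)
        hP.differentiableOn hP' hrec
  exact fun s ↦ ⟨hAeven s, hBodd s (hAeven s)⟩

/-- Olver's recursion: `A_0 = 1`,
`2B_s(z) = -A_s'(z) + ∫_0^z (f(t)A_s(t) - ((2μ+1)/t)A_s'(t)) dt`, and
`2A_{s+1}(z) = ((2μ+1)/z)B_s(z) - B_s'(z) + ∫ f(z)B_s(z) dz`, where the
antiderivative `P` of `f·B_s` is chosen to vanish at `0`.  The integral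
equation for `B_s` is encoded by its differentiated form on `D \ {0}`
together with its value at `z = 0`. -/
theorem olver_recursion_even_odd (D : Set ℂ) (f : ℂ → ℂ) (μ : ℂ)
    (A B : ℕ → ℂ → ℂ)
    (hD : IsOpen D) (hDconn : IsPreconnected D) (hDsc : SimplyConnectedSpace D)
    (hD0 : (0 : ℂ) ∈ D) (hDsymm : ∀ z ∈ D, -z ∈ D)
    (hf : AnalyticOnNhd ℂ f D) (hfe : ∀ z ∈ D, f (-z) = f z)
    (hAanal : ∀ s, AnalyticOnNhd ℂ (A s) D)
    (hBanal : ∀ s, AnalyticOnNhd ℂ (B s) D)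
    (hA0 : ∀ z, A 0 z = 1)
    (hrecB : ∀ s, ∀ z ∈ D, z ≠ 0 →
      2 * deriv (B s) z =
        -(deriv (deriv (A s)) z) + f z * A s z - ((2 * μ + 1) / z) * deriv (A s) z)
    (hrecB0 : ∀ s, 2 * B s 0 = -(deriv (A s) 0))
    (hrecA : ∀ s, ∃ P : ℂ → ℂ, AnalyticOnNhd ℂ P D ∧ P 0 = 0 ∧
      (∀ z ∈ D, deriv P z = f z * B s z) ∧
      ∀ z ∈ D, z ≠ 0 →
        2 * A (s + 1) z = ((2 * μ + 1) / z) * B s z - deriv (B s) z + P z) :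
    ∀ s, (∀ z ∈ D, A s (-z) = A s z) ∧ (∀ z ∈ D, B s (-z) = -(B s z)) :=
  olver_recursion_even_odd_general D f μ A B hD hDconn hD0 hDsymm hfe hBanal hA0 hrecB hrecB0 hrecA
end

section
/- Let A_s, B_s be the normalized solution of the Olver recursion (A_0 = 1, A_s(0) = 0 for s ≥ 1) with respect to an even analytic function f on a disk about 0. If Â_s, B̂_s is any other solution of the same recursion with Â_0 = 1, then for all s ≥ 0: Â_s(z) = Σ_{r=0}^s A_r(z)·Â_{s−r}(0) and B̂_s(z) = Σ_{r=0}^s B_r(z)·Â_{s−r}(0). -/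
/-!
Olver's recursion is linear and splits into two steps: `A_s` determines `B_s` uniquely (its
derivative off `0`, hence everywhere, and its value at `0` are prescribed), and `B_s` determines
`A_{s+1}` up to an additive constant. So the convolutions `∑ A_r(z) Â_{s-r}(0)` and
`∑ B_r(z) Â_{s-r}(0)` satisfy the same recursion, and by induction on `s` they coincide with
`Â_s`, `B̂_s`: the constant in the second step is read off at `z = 0`, where `A_r(0) = 0` for
`r ≥ 1`.
-/

/-- A pair of sequences of analytic functions `A_s`, `B_s` on `D` satisfying
Olver's recursion with parameter `μ` attached to the function `f`:
`A_0 = 1`, `2B_s(z) = -A_s'(z) + ∫_0^z (f(t)A_s(t) - ((2μ+1)/t)A_s'(t)) dt`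
(encoded by its differentiated form on `D \ {0}` together with the value at
`z = 0`), and `2A_{s+1}(z) = ((2μ+1)/z)B_s(z) - B_s'(z) + P(z)` where `P` is
some (arbitrary) analytic antiderivative of `f·B_s` on `D`. -/
structure OlverSolution (D : Set ℂ) (f : ℂ → ℂ) (μ : ℂ) (A B : ℕ → ℂ → ℂ) : Prop where
  analA : ∀ s, AnalyticOnNhd ℂ (A s) D
  analB : ∀ s, AnalyticOnNhd ℂ (B s) D
  A_zero : ∀ z, A 0 z = 1
  recB : ∀ s, ∀ z ∈ D, z ≠ 0 →
    2 * deriv (B s) z =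
      -(deriv (deriv (A s)) z) + f z * A s z - ((2 * μ + 1) / z) * deriv (A s) z
  recB₀ : ∀ s, 2 * B s 0 = -(deriv (A s) 0)
  recA : ∀ s, ∃ P : ℂ → ℂ, AnalyticOnNhd ℂ P D ∧
    (∀ z ∈ D, deriv P z = f z * B s z) ∧
    ∀ z ∈ D, z ≠ 0 →
      2 * A (s + 1) z = ((2 * μ + 1) / z) * B s z - deriv (B s) z + P z

open Set Filter Topology

lemma ContinuousAt.eq_of_eqOn_diff_singleton {X Y : Type*} [TopologicalSpace X]
    [TopologicalSpace Y] [T2Space Y] {f g : X → Y} {x₀ : X} {D : Set X} [(𝓝[≠] x₀).NeBot]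
    (hD : D ∈ 𝓝 x₀) (hf : ContinuousAt f x₀) (hg : ContinuousAt g x₀)
    (h : EqOn f g (D \ {x₀})) : f x₀ = g x₀ :=
  ((hf.eventuallyEq_nhds_iff_eventuallyEq_nhdsNE hg).mp <| eventually_nhdsWithin_iff.mpr <|
    mem_of_superset hD fun _ hx hne => h ⟨hx, hne⟩).eq_of_nhds

lemma deriv_sum_mul_const {𝕜 ι : Type*} [NontriviallyNormedField 𝕜] {t : Finset ι}
    {g : ι → 𝕜 → 𝕜} {c : ι → 𝕜} {z : 𝕜} (hg : ∀ i ∈ t, DifferentiableAt 𝕜 (g i) z) :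
    deriv (fun y => ∑ i ∈ t, g i y * c i) z = ∑ i ∈ t, deriv (g i) z * c i := by
  rw [deriv_fun_sum fun i hi => (hg i hi).mul_const _]
  exact Finset.sum_congr rfl fun i hi => deriv_mul_const (hg i hi) _

/-- The first half of Olver's recursion, turning `a = A_s` into `b = B_s`. -/
def IsOlverB (D : Set ℂ) (f : ℂ → ℂ) (μ : ℂ) (a b : ℂ → ℂ) : Prop :=
  (∀ z ∈ D, z ≠ 0 →
    2 * deriv b z = -(deriv (deriv a) z) + f z * a z - ((2 * μ + 1) / z) * deriv a z) ∧
  2 * b 0 = -(deriv a 0)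

/-- The second half of Olver's recursion, turning `b = B_s` into `a = A_{s+1}`. -/
def IsOlverA (D : Set ℂ) (f : ℂ → ℂ) (μ : ℂ) (b a : ℂ → ℂ) : Prop :=
  ∃ P : ℂ → ℂ, AnalyticOnNhd ℂ P D ∧ (∀ z ∈ D, deriv P z = f z * b z) ∧
    ∀ z ∈ D, z ≠ 0 → 2 * a z = ((2 * μ + 1) / z) * b z - deriv b z + P z

section

variable {D : Set ℂ} {f : ℂ → ℂ} {μ : ℂ}

lemma OlverSolution.isOlverB {A B : ℕ → ℂ → ℂ} (h : OlverSolution D f μ A B) (s : ℕ) :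
    IsOlverB D f μ (A s) (B s) :=
  ⟨h.recB s, h.recB₀ s⟩

lemma OlverSolution.isOlverA {A B : ℕ → ℂ → ℂ} (h : OlverSolution D f μ A B) (s : ℕ) :
    IsOlverA D f μ (B s) (A (s + 1)) :=
  h.recA s

lemma IsOlverB.sum_mul_const {ι : Type*} {t : Finset ι} {a b : ι → ℂ → ℂ} {c : ι → ℂ}
    (hD : IsOpen D) (h0 : (0 : ℂ) ∈ D) (ha : ∀ i, AnalyticOnNhd ℂ (a i) D)
    (hb : ∀ i, AnalyticOnNhd ℂ (b i) D) (h : ∀ i ∈ t, IsOlverB D f μ (a i) (b i)) :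
    IsOlverB D f μ (fun z => ∑ i ∈ t, a i z * c i) (fun z => ∑ i ∈ t, b i z * c i) := by
  have hda : EqOn (deriv fun z => ∑ i ∈ t, a i z * c i)
      (fun z => ∑ i ∈ t, deriv (a i) z * c i) D := fun z hz =>
    deriv_sum_mul_const fun i _ => (ha i z hz).differentiableAt
  refine ⟨fun z hz hz0 => ?_, ?_⟩
  · rw [hda.deriv hD hz, hda hz, deriv_sum_mul_const fun i _ => (hb i z hz).differentiableAt,
      deriv_sum_mul_const fun i _ => ((ha i).deriv z hz).differentiableAt]
    simp only [Finset.mul_sum, ← Finset.sum_neg_distrib, ← Finset.sum_add_distrib,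
      ← Finset.sum_sub_distrib]
    refine Finset.sum_congr rfl fun i hi => ?_
    linear_combination c i * (h i hi).1 z hz hz0
  · rw [hda h0, Finset.mul_sum, ← Finset.sum_neg_distrib]
    refine Finset.sum_congr rfl fun i hi => ?_
    linear_combination c i * (h i hi).2

lemma IsOlverA.sum_mul_const {ι : Type*} {t : Finset ι} {a b : ι → ℂ → ℂ} {c : ι → ℂ}
    (hb : ∀ i, AnalyticOnNhd ℂ (b i) D) (h : ∀ i ∈ t, IsOlverA D f μ (b i) (a i)) :
    IsOlverA D f μ (fun z => ∑ i ∈ t, b i z * c i) (fun z => ∑ i ∈ t, a i z * c i) := by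
  choose! P hPa hPd hPr using h
  refine ⟨fun z => ∑ i ∈ t, P i z * c i,
    Finset.analyticOnNhd_fun_sum _ fun i hi => (hPa i hi).mul analyticOnNhd_const,
    fun z hz => ?_, fun z hz hz0 => ?_⟩
  · rw [deriv_sum_mul_const fun i hi => (hPa i hi z hz).differentiableAt, Finset.mul_sum]
    exact Finset.sum_congr rfl fun i hi => by rw [hPd i hi z hz]; ring
  · rw [deriv_sum_mul_const fun i _ => (hb i z hz).differentiableAt]
    simp only [Finset.mul_sum, ← Finset.sum_sub_distrib, ← Finset.sum_add_distrib]
    refine Finset.sum_congr rfl fun i hi => ?_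
    linear_combination c i * hPr i hi z hz hz0

/-- `B_s` is determined by `A_s`: the two derivatives agree off `0`, hence at `0` by continuity,
and the values at `0` agree. -/
lemma IsOlverB.eqOn {a a' b b' : ℂ → ℂ} (hD : IsOpen D) (hDc : IsPreconnected D)
    (h0 : (0 : ℂ) ∈ D) (hb : AnalyticOnNhd ℂ b D) (hb' : AnalyticOnNhd ℂ b' D)
    (h : IsOlverB D f μ a b) (h' : IsOlverB D f μ a' b') (haa' : EqOn a a' D) :
    EqOn b b' D := by
  have hda := haa'.deriv hD
  have hdb : EqOn (deriv b) (deriv b') (D \ {0}) := fun z ⟨hz, hz0⟩ => by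
    have := h.1 z hz hz0
    rw [haa' hz, hda hz, hda.deriv hD hz, ← h'.1 z hz hz0] at this
    exact mul_left_cancel₀ two_ne_zero this
  refine hD.eqOn_of_deriv_eq hDc hb.differentiableOn hb'.differentiableOn
    (fun z hz => ?_) h0 (mul_left_cancel₀ two_ne_zero (by rw [h.2, h'.2, hda h0]))
  rcases eq_or_ne z 0 with rfl | hz0
  · exact ContinuousAt.eq_of_eqOn_diff_singleton (hD.mem_nhds h0)
      (hb.deriv 0 h0).continuousAt (hb'.deriv 0 h0).continuousAt hdb
  · exact hdb ⟨hz, hz0⟩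

/-- `A_{s+1}` is determined by `B_s` up to an additive constant: the difference of two solutions
is `(P - P') / 2` off `0`, and `P - P'` is constant. -/
lemma IsOlverA.sub_eq_sub_apply_zero {a a' b b' : ℂ → ℂ} (hD : IsOpen D)
    (hDc : IsPreconnected D) (h0 : (0 : ℂ) ∈ D) (ha : AnalyticOnNhd ℂ a D)
    (ha' : AnalyticOnNhd ℂ a' D) (h : IsOlverA D f μ b a) (h' : IsOlverA D f μ b' a')
    (hbb' : EqOn b b' D) {z : ℂ} (hz : z ∈ D) : a z - a' z = a 0 - a' 0 := by
  obtain ⟨P, hPa, hPd, hPr⟩ := h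
  obtain ⟨P', hPa', hPd', hPr'⟩ := h'
  have hP : ∀ w ∈ D, P w - P' w = P 0 - P' 0 := fun w hw =>
    hD.is_const_of_deriv_eq_zero hDc (hPa.sub hPa').differentiableOn (fun x hx => by
      rw [deriv_sub (hPa x hx).differentiableAt (hPa' x hx).differentiableAt, hPd x hx,
        hPd' x hx, hbb' hx, Pi.zero_apply, sub_self]) hw h0
  have hoff : EqOn (a - a') (fun _ => (P 0 - P' 0) / 2) (D \ {0}) := fun w ⟨hw, hw0⟩ => by
    rw [Pi.sub_apply, eq_div_iff two_ne_zero, ← hP w hw]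
    linear_combination hPr w hw hw0 - hPr' w hw hw0 +
      ((2 * μ + 1) / w) * hbb' hw - (hbb'.deriv hD) hw
  have hzero := ContinuousAt.eq_of_eqOn_diff_singleton (hD.mem_nhds h0)
    ((ha.sub ha') 0 h0).continuousAt continuousAt_const hoff
  rcases eq_or_ne z 0 with rfl | hz0
  · rfl
  · exact (hoff ⟨hz, hz0⟩).trans hzero.symm

end

theorem olver_solution_formula_general (R : ℝ) (hR : 0 < R) (f : ℂ → ℂ) (μ : ℂ)
    (A B Ah Bh : ℕ → ℂ → ℂ)
    (hAB : OlverSolution (Metric.ball 0 R) f μ A B)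
    (hnorm : ∀ s, A (s + 1) 0 = 0)
    (hAB' : OlverSolution (Metric.ball 0 R) f μ Ah Bh) :
    ∀ s, ∀ z ∈ Metric.ball (0 : ℂ) R,
      Ah s z = ∑ r ∈ Finset.range (s + 1), A r z * Ah (s - r) 0 ∧
      Bh s z = ∑ r ∈ Finset.range (s + 1), B r z * Ah (s - r) 0 := by
  set D := Metric.ball (0 : ℂ) R
  have hD : IsOpen D := Metric.isOpen_ball
  have hDc : IsPreconnected D := (convex_ball 0 R).isPreconnected
  have h0 : (0 : ℂ) ∈ D := Metric.mem_ball_self hR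
  have sum_analytic {F : ℕ → ℂ → ℂ} (hF : ∀ r, AnalyticOnNhd ℂ (F r) D) (t : Finset ℕ)
      (c : ℕ → ℂ) : AnalyticOnNhd ℂ (fun z => ∑ r ∈ t, F r z * c r) D :=
    Finset.analyticOnNhd_fun_sum _ fun r _ => (hF r).mul analyticOnNhd_const
  have formulaB (s : ℕ)
      (hs : EqOn (Ah s) (fun z => ∑ r ∈ Finset.range (s + 1), A r z * Ah (s - r) 0) D) :
      EqOn (Bh s) (fun z => ∑ r ∈ Finset.range (s + 1), B r z * Ah (s - r) 0) D :=
    (hAB'.isOlverB s).eqOn hD hDc h0 (hAB'.analB s) (sum_analytic hAB.analB _ _)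
      (IsOlverB.sum_mul_const hD h0 hAB.analA hAB.analB fun r _ => hAB.isOlverB r) hs
  have formulaA (s : ℕ) :
      EqOn (Ah s) (fun z => ∑ r ∈ Finset.range (s + 1), A r z * Ah (s - r) 0) D := by
    induction s with
    | zero => intro z _; simp [hAB.A_zero, hAB'.A_zero]
    | succ s ih =>
      intro z hz
      dsimp only
      have step := (hAB'.isOlverA s).sub_eq_sub_apply_zero hD hDc h0 (hAB'.analA (s + 1))
        (sum_analytic (fun r => hAB.analA (r + 1)) _ _)
        (IsOlverA.sum_mul_const hAB.analB fun r _ => hAB.isOlverA r) (formulaB s ih) hz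
      simp only [hnorm, zero_mul, Finset.sum_const_zero, sub_zero] at step
      rw [Finset.sum_range_succ', hAB.A_zero, one_mul, Nat.sub_zero]
      simp only [Nat.add_sub_add_right]
      linear_combination step
  exact fun s z hz => ⟨formulaA s hz, formulaB s (formulaA s) hz⟩

/-- Lemma 5.1 of the paper: any solution `Â, B̂` of the Olver recursion with
`Â_0 = 1` is obtained from the normalized solution (`A_0 = 1`, `A_s(0) = 0`
for `s ≥ 1`) by `Â_s(z) = ∑_{r=0}^s A_r(z) Â_{s-r}(0)` and
`B̂_s(z) = ∑_{r=0}^s B_r(z) Â_{s-r}(0)`. -/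
theorem olver_solution_formula (R : ℝ) (hR : 0 < R) (f : ℂ → ℂ) (μ : ℂ)
    (hf : AnalyticOnNhd ℂ f (Metric.ball 0 R))
    (hfe : ∀ z ∈ Metric.ball (0 : ℂ) R, f (-z) = f z)
    (A B Ah Bh : ℕ → ℂ → ℂ)
    (hAB : OlverSolution (Metric.ball 0 R) f μ A B)
    (hnorm : ∀ s, A (s + 1) 0 = 0)
    (hAB' : OlverSolution (Metric.ball 0 R) f μ Ah Bh) :
    ∀ s, ∀ z ∈ Metric.ball (0 : ℂ) R,
      Ah s z = ∑ r ∈ Finset.range (s + 1), A r z * Ah (s - r) 0 ∧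
      Bh s z = ∑ r ∈ Finset.range (s + 1), B r z * Ah (s - r) 0 :=
  olver_solution_formula_general R hR f μ A B Ah Bh hAB hnorm hAB'
end

section
/- With A_s(μ,z), B_s(μ,z) the normalized Olver recursion solutions and a_s, b_s defined by a_{s+1}(z)=A_{s+1}(−μ,z)+(2μ/z)B_s(−μ,z), b_s(z)=B_s(−μ,z), one has for all s ≥ 0: a_s(z) = A_s(μ,z) + 2μ Σ_{r=0}^{s−1} A_r(μ,z) B'_{s−1−r}(−μ,0) and b_s(z) = B_s(μ,z) + 2μ Σ_{r=0}^{s−1} B_r(μ,z) B'_{s−1−r}(−μ,0). -/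
/-!
The substitution `a = A + (2μ/z) B` turns Olver's operator with parameter `-μ` into the one with
parameter `μ`, so `(a_s, b_s)` solves the `μ`-recursion, except that
`a_{k+1}(0) = 2μ B'_k(-μ,0)` instead of `0`. Since the recursion is linear and starts from
`A_0 = 1`, the shifted sums `u_k + 2μ ∑_{r<k} u_r c_{k-1-r}` of the normalized
`μ`-solution solve it with exactly these initial values when `c_k = B'_k(-μ,0)`. A solution is
determined by these values: `B_s` by `A_s` through `B_s(0) = 0`, which holds because `f` even makes
every `A_s` even and every `B_s` odd, and `A_{s+1}` by `B_s` up to an additive constant, which is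
read off at `z = 0`. Induction on `s` then identifies the two solutions.
-/

open Metric Set Filter Topology Finset

namespace Olver

section Ball

variable {R : ℝ} {g h : ℂ → ℂ}

lemma neg_mem_ball_zero {z : ℂ} (hz : z ∈ ball (0 : ℂ) R) : -z ∈ ball (0 : ℂ) R := by
  simpa using hz

lemma eventually_mem_ball_ne_zero {z : ℂ} (hz : z ∈ ball (0 : ℂ) R) (hz₀ : z ≠ 0) :
    ∀ᶠ w in 𝓝 z, w ∈ ball (0 : ℂ) R ∧ w ≠ 0 :=
  (isOpen_ball.inter isOpen_ne).mem_nhds ⟨hz, hz₀⟩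

lemma eqOn_ball_of_eqOn_punctured (hR : 0 < R) (hg : AnalyticOnNhd ℂ g (ball 0 R))
    (hh : AnalyticOnNhd ℂ h (ball 0 R)) (hgh : ∀ z ∈ ball (0 : ℂ) R, z ≠ 0 → g z = h z) :
    EqOn g h (ball 0 R) := by
  refine hg.eqOn_of_preconnected_of_frequently_eq hh (convex_ball 0 R).isPreconnected
    (mem_ball_self hR) (Eventually.frequently ?_)
  filter_upwards [mem_nhdsWithin_of_mem_nhds (ball_mem_nhds 0 hR), self_mem_nhdsWithin]
    with z hz hz₀ using hgh z hz hz₀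

lemma eqOn_ball_of_deriv_eq (hR : 0 < R) (hg : AnalyticOnNhd ℂ g (ball 0 R))
    (hh : AnalyticOnNhd ℂ h (ball 0 R))
    (hd : ∀ z ∈ ball (0 : ℂ) R, z ≠ 0 → deriv g z = deriv h z) (h₀ : g 0 = h 0) :
    EqOn g h (ball 0 R) :=
  isOpen_ball.eqOn_of_deriv_eq (convex_ball 0 R).isPreconnected hg.differentiableOn
    hh.differentiableOn (eqOn_ball_of_eqOn_punctured hR hg.deriv hh.deriv hd)
    (mem_ball_self hR) h₀

lemma deriv_neg_of_even (hg : ∀ z ∈ ball (0 : ℂ) R, g (-z) = g z) {z : ℂ}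
    (hz : z ∈ ball (0 : ℂ) R) : deriv g (-z) = -deriv g z := by
  have hloc : (fun w => g (-w)) =ᶠ[𝓝 z] g :=
    eventually_of_mem (isOpen_ball.mem_nhds hz) hg
  rw [← hloc.deriv_eq, deriv_comp_neg, neg_neg]

lemma deriv_neg_of_odd (hg : ∀ z ∈ ball (0 : ℂ) R, g (-z) = -g z) {z : ℂ}
    (hz : z ∈ ball (0 : ℂ) R) : deriv g (-z) = deriv g z := by
  have hloc : (fun w => g (-w)) =ᶠ[𝓝 z] fun w => -g w :=
    eventually_of_mem (isOpen_ball.mem_nhds hz) hg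
  rw [← neg_neg (deriv g z), ← deriv.fun_neg, ← hloc.deriv_eq, deriv_comp_neg, neg_neg]

lemma even_of_deriv_odd (hR : 0 < R) (hg : AnalyticOnNhd ℂ g (ball 0 R))
    (hd : ∀ z ∈ ball (0 : ℂ) R, z ≠ 0 → deriv g (-z) = -deriv g z) :
    ∀ z ∈ ball (0 : ℂ) R, g (-z) = g z := by
  have hneg : AnalyticOnNhd ℂ (fun w => g (-w)) (ball 0 R) :=
    hg.comp analyticOnNhd_id.neg fun _ => neg_mem_ball_zero
  refine fun z hz => eqOn_ball_of_deriv_eq hR hneg hg (fun w hw hw₀ => ?_) (by simp) hz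
  rw [deriv_comp_neg, hd w hw hw₀, neg_neg]

lemma odd_of_deriv_even (hR : 0 < R) (hg : AnalyticOnNhd ℂ g (ball 0 R))
    (hd : ∀ z ∈ ball (0 : ℂ) R, z ≠ 0 → deriv g (-z) = deriv g z) (h₀ : g 0 = 0) :
    ∀ z ∈ ball (0 : ℂ) R, g (-z) = -g z := by
  have hneg : AnalyticOnNhd ℂ (fun w => g (-w)) (ball 0 R) :=
    hg.comp analyticOnNhd_id.neg fun _ => neg_mem_ball_zero
  refine fun z hz => eqOn_ball_of_deriv_eq hR hneg hg.neg (fun w hw hw₀ => ?_) (by simp [h₀]) hz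
  rw [deriv_comp_neg, hd w hw hw₀, deriv.neg]

end Ball

/-- The right-hand side of the differentiated `B`-recursion: `2 B_s' = olverOp f μ A_s` off `0`. -/
noncomputable def olverOp (f : ℂ → ℂ) (ν : ℂ) (a : ℂ → ℂ) (z : ℂ) : ℂ :=
  -deriv (deriv a) z + f z * a z - ((2 * ν + 1) / z) * deriv a z

lemma olverOp_congr {f g h : ℂ → ℂ} {ν z : ℂ} (hgh : g =ᶠ[𝓝 z] h) :
    olverOp f ν g z = olverOp f ν h z := by
  simp only [olverOp, hgh.deriv_eq, hgh.deriv.deriv_eq, hgh.eq_of_nhds]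

lemma olverOp_one (f : ℂ → ℂ) (ν z : ℂ) : olverOp f ν (fun _ => 1) z = f z := by
  simp [olverOp]

lemma hasDerivAt_div_mul (a : ℂ) {g : ℂ → ℂ} {g' z : ℂ} (hg : HasDerivAt g g' z) (hz : z ≠ 0) :
    HasDerivAt (fun w => a / w * g w) (a / z * (g' - 1 / z * g z)) z := by
  have h := ((hasDerivAt_inv hz).const_mul a).fun_mul hg
  simp only [← div_eq_mul_inv] at h
  exact h.congr_deriv (by ring)

lemma olverOp_flip {U : Set ℂ} (hU : IsOpen U) {f A b P : ℂ → ℂ} {μ z : ℂ}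
    (hA : AnalyticOnNhd ℂ A U) (hb : AnalyticOnNhd ℂ b U) (hP : AnalyticOnNhd ℂ P U)
    (hrec : ∀ w ∈ U, 2 * A w = ((2 * -μ + 1) / w) * b w - deriv b w + P w)
    (hP' : ∀ w ∈ U, deriv P w = f w * b w) (hz : z ∈ U) (hz₀ : z ≠ 0) :
    olverOp f μ (fun w => A w + 2 * μ / w * b w) z = olverOp f (-μ) A z := by
  have hb' : HasDerivAt b (deriv b z) z := (hb z hz).differentiableAt.hasDerivAt
  have hb'' : HasDerivAt (deriv b) (deriv (deriv b) z) z :=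
    (hb.deriv z hz).differentiableAt.hasDerivAt
  have hA'' : HasDerivAt (deriv A) (deriv (deriv A) z) z :=
    (hA.deriv z hz).differentiableAt.hasDerivAt
  have hnear : ∀ᶠ w in 𝓝 z, w ∈ U ∧ w ≠ 0 := (hU.inter isOpen_ne).mem_nhds ⟨hz, hz₀⟩
  have hflip' : deriv (fun w => A w + 2 * μ / w * b w) =ᶠ[𝓝 z]
      fun w => deriv A w + 2 * μ / w * (deriv b w - 1 / w * b w) := by
    filter_upwards [hnear] with w ⟨hw, hw₀⟩
    exact ((hA w hw).differentiableAt.hasDerivAt.add (hasDerivAt_div_mul _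
      (hb w hw).differentiableAt.hasDerivAt hw₀)).deriv
  have hflip'' := hA''.fun_add
    (hasDerivAt_div_mul (2 * μ) (hb''.fun_sub (hasDerivAt_div_mul 1 hb' hz₀)) hz₀)
  have hA' : 2 * deriv A z = (2 * -μ + 1) / z * (deriv b z - 1 / z * b z)
      - deriv (deriv b) z + f z * b z := by
    have hA_eq : (fun w => 2 * A w) =ᶠ[𝓝 z]
        fun w => (2 * -μ + 1) / w * b w - deriv b w + P w :=
      eventually_of_mem (hU.mem_nhds hz) hrec
    have hrhs := ((hasDerivAt_div_mul (2 * -μ + 1) hb' hz₀).fun_sub hb'').fun_add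
      (hP z hz).differentiableAt.hasDerivAt
    rw [← deriv_const_mul _ (hA z hz).differentiableAt, hA_eq.deriv_eq, hrhs.deriv, hP' z hz]
  simp only [olverOp]
  rw [hflip'.deriv_eq, hflip''.deriv, hflip'.eq_of_nhds]
  linear_combination (-2 * μ / z) * hA'

lemma deriv_eq_of_div_eq {g h : ℂ → ℂ} (hg : DifferentiableAt ℂ g 0) (hg₀ : g 0 = 0)
    (hh : ContinuousAt h 0) (hgh : ∀ᶠ z in 𝓝[≠] 0, g z / z = h z) : deriv g 0 = h 0 := by
  refine tendsto_nhds_unique (f := fun z => g z / z) (l := 𝓝[≠] 0) ?_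
    ((hh.tendsto.mono_left nhdsWithin_le_nhds).congr' (hgh.mono fun _ h => h.symm))
  refine hg.hasDerivAt.tendsto_slope_zero.congr fun z => ?_
  rw [zero_add, hg₀, sub_zero, smul_eq_mul, inv_mul_eq_div]

variable {μ : ℂ} {c : ℕ → ℂ} {k : ℕ}

noncomputable def flipSum (μ : ℂ) (c : ℕ → ℂ) (k : ℕ) : (ℕ → ℂ) →ₗ[ℂ] ℂ where
  toFun u := u k + 2 * μ * ∑ r ∈ range k, u r * c (k - 1 - r)
  map_add' u v := by
    simp only [Pi.add_apply, add_mul, sum_add_distrib]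
    ring
  map_smul' a u := by
    simp only [Pi.smul_apply, smul_eq_mul, RingHom.id_apply, mul_assoc, ← mul_sum]
    ring

lemma flipSum_apply (u : ℕ → ℂ) :
    flipSum μ c k u = u k + 2 * μ * ∑ r ∈ range k, u r * c (k - 1 - r) := rfl

lemma flipSum_zero (u : ℕ → ℂ) : flipSum μ c 0 u = u 0 := by
  simp [flipSum_apply]

lemma flipSum_succ (u : ℕ → ℂ) :
    flipSum μ c (k + 1) u = flipSum μ c k (fun r => u (r + 1)) + 2 * μ * u 0 * c k := by
  have hsum : ∑ r ∈ range k, u (r + 1) * c (k + 1 - 1 - (r + 1))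
      = ∑ r ∈ range k, u (r + 1) * c (k - 1 - r) :=
    sum_congr rfl fun r _ => by rw [show k + 1 - 1 - (r + 1) = k - 1 - r by omega]
  rw [flipSum_apply, flipSum_apply, sum_range_succ', hsum, Nat.add_sub_cancel, Nat.sub_zero]
  ring

lemma flipSum_succ_of_succ_eq_zero {u : ℕ → ℂ} (hu : ∀ r, u (r + 1) = 0) :
    flipSum μ c (k + 1) u = 2 * μ * u 0 * c k := by
  rw [flipSum_succ, show (fun r => u (r + 1)) = 0 from funext hu, map_zero, zero_add]

lemma hasDerivAt_flipSum {g : ℕ → ℂ → ℂ} {g' : ℕ → ℂ} {z : ℂ}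
    (hg : ∀ r, HasDerivAt (g r) (g' r) z) :
    HasDerivAt (fun w => flipSum μ c k fun r => g r w) (flipSum μ c k g') z := by
  simp only [flipSum_apply]
  exact (hg k).add ((HasDerivAt.fun_sum fun r _ => (hg r).mul_const _).const_mul _)

lemma deriv_flipSum {g : ℕ → ℂ → ℂ} {z : ℂ} (hg : ∀ r, DifferentiableAt ℂ (g r) z) :
    deriv (fun w => flipSum μ c k fun r => g r w) z = flipSum μ c k fun r => deriv (g r) z :=
  (hasDerivAt_flipSum fun r => (hg r).hasDerivAt).deriv

lemma analyticOnNhd_flipSum {g : ℕ → ℂ → ℂ} {s : Set ℂ} (hg : ∀ r, AnalyticOnNhd ℂ (g r) s) :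
    AnalyticOnNhd ℂ (fun w => flipSum μ c k fun r => g r w) s := by
  simp only [flipSum_apply]
  exact (hg k).add (analyticOnNhd_const.mul
    (Finset.analyticOnNhd_fun_sum _ fun r _ => (hg r).mul analyticOnNhd_const))

end Olver

namespace OlverSolution

open Olver

variable {R : ℝ} {f : ℂ → ℂ} {ν μ : ℂ} {c : ℕ → ℂ} {A B : ℕ → ℂ → ℂ}

lemma B_odd_of_A_even (hR : 0 < R) (hfe : ∀ z ∈ ball (0 : ℂ) R, f (-z) = f z)
    (hS : OlverSolution (ball 0 R) f ν A B) {s : ℕ}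
    (hA : ∀ z ∈ ball (0 : ℂ) R, A s (-z) = A s z) :
    ∀ z ∈ ball (0 : ℂ) R, B s (-z) = -B s z := by
  have hA' := fun z (hz : z ∈ ball (0 : ℂ) R) => deriv_neg_of_even hA hz
  have hA'' := fun z (hz : z ∈ ball (0 : ℂ) R) => deriv_neg_of_odd hA' hz
  have hA'₀ : deriv (A s) 0 = 0 := by
    have h := hA' 0 (mem_ball_self hR)
    rw [neg_zero] at h
    linear_combination h / 2
  refine odd_of_deriv_even hR (hS.analB s) (fun z hz hz₀ => ?_)
    (by linear_combination hS.recB₀ s / 2 - hA'₀ / 2)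
  have h₁ := hS.recB s z hz hz₀
  have h₂ := hS.recB s (-z) (neg_mem_ball_zero hz) (neg_ne_zero.2 hz₀)
  rw [hfe z hz, hA z hz, hA' z hz, hA'' z hz, div_neg] at h₂
  linear_combination (h₂ - h₁) / 2

lemma A_succ_even_of_B_odd (hR : 0 < R) (hfe : ∀ z ∈ ball (0 : ℂ) R, f (-z) = f z)
    (hS : OlverSolution (ball 0 R) f ν A B) {s : ℕ}
    (hB : ∀ z ∈ ball (0 : ℂ) R, B s (-z) = -B s z) :
    ∀ z ∈ ball (0 : ℂ) R, A (s + 1) (-z) = A (s + 1) z := by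
  obtain ⟨P, hPa, hP', hrec⟩ := hS.recA s
  have hPe : ∀ z ∈ ball (0 : ℂ) R, P (-z) = P z := even_of_deriv_odd hR hPa fun z hz _ => by
    rw [hP' _ (neg_mem_ball_zero hz), hP' z hz, hfe z hz, hB z hz]
    ring
  have hneg : AnalyticOnNhd ℂ (fun w => A (s + 1) (-w)) (ball 0 R) :=
    (hS.analA _).comp analyticOnNhd_id.neg fun _ => neg_mem_ball_zero
  refine fun z hz => eqOn_ball_of_eqOn_punctured hR hneg (hS.analA _) (fun w hw hw₀ => ?_) hz
  have h₁ := hrec w hw hw₀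
  have h₂ := hrec (-w) (neg_mem_ball_zero hw) (neg_ne_zero.2 hw₀)
  rw [hB w hw, deriv_neg_of_odd hB hw, hPe w hw, div_neg] at h₂
  linear_combination (h₂ - h₁) / 2

theorem parity (hR : 0 < R) (hfe : ∀ z ∈ ball (0 : ℂ) R, f (-z) = f z)
    (hS : OlverSolution (ball 0 R) f ν A B) (s : ℕ) :
    (∀ z ∈ ball (0 : ℂ) R, A s (-z) = A s z) ∧ ∀ z ∈ ball (0 : ℂ) R, B s (-z) = -B s z := by
  induction s with
  | zero =>
    have hA : ∀ z ∈ ball (0 : ℂ) R, A 0 (-z) = A 0 z := fun z _ => by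
      rw [hS.A_zero, hS.A_zero]
    exact ⟨hA, hS.B_odd_of_A_even hR hfe hA⟩
  | succ s ih =>
    have hA := hS.A_succ_even_of_B_odd hR hfe ih.2
    exact ⟨hA, hS.B_odd_of_A_even hR hfe hA⟩

lemma B_apply_zero (hR : 0 < R) (hfe : ∀ z ∈ ball (0 : ℂ) R, f (-z) = f z)
    (hS : OlverSolution (ball 0 R) f ν A B) (s : ℕ) : B s 0 = 0 := by
  have h := (hS.parity hR hfe s).2 0 (mem_ball_self hR)
  rw [neg_zero] at h
  linear_combination h / 2

lemma flipSum_recB (hS : OlverSolution (ball 0 R) f ν A B) (k : ℕ) {z : ℂ}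
    (hz : z ∈ ball (0 : ℂ) R) (hz₀ : z ≠ 0) :
    2 * deriv (fun w => flipSum μ c k fun r => B r w) z =
      olverOp f ν (fun w => flipSum μ c k fun r => A r w) z := by
  have hA' : deriv (fun w => flipSum μ c k fun r => A r w) =ᶠ[𝓝 z]
      fun w => flipSum μ c k fun r => deriv (A r) w :=
    eventually_of_mem (isOpen_ball.mem_nhds hz) fun w hw =>
      deriv_flipSum fun r => (hS.analA r w hw).differentiableAt
  have hrec : (2 : ℂ) • (fun r => deriv (B r) z) = -(fun r => deriv (deriv (A r)) z)
      + f z • (fun r => A r z) - ((2 * ν + 1) / z) • fun r => deriv (A r) z :=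
    funext fun r => by simpa using hS.recB r z hz hz₀
  simp only [olverOp]
  rw [hA'.deriv_eq, hA'.eq_of_nhds, deriv_flipSum fun r => (hS.analB r z hz).differentiableAt,
    deriv_flipSum fun r => (hS.analA r).deriv z hz |>.differentiableAt]
  simpa using congrArg (flipSum μ c k) hrec

lemma flipSum_recA (hS : OlverSolution (ball 0 R) f ν A B) {P : ℕ → ℂ → ℂ}
    (hP : ∀ r, ∀ z ∈ ball (0 : ℂ) R, z ≠ 0 →
      2 * A (r + 1) z = ((2 * ν + 1) / z) * B r z - deriv (B r) z + P r z)
    (k : ℕ) {z : ℂ} (hz : z ∈ ball (0 : ℂ) R) (hz₀ : z ≠ 0) :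
    2 * flipSum μ c (k + 1) (fun r => A r z) =
      ((2 * ν + 1) / z) * flipSum μ c k (fun r => B r z) - flipSum μ c k (fun r => deriv (B r) z)
        + flipSum μ c k (fun r => P r z) + 4 * μ * c k := by
  have hrec : (2 : ℂ) • (fun r => A (r + 1) z) = ((2 * ν + 1) / z) • (fun r => B r z)
      - (fun r => deriv (B r) z) + fun r => P r z :=
    funext fun r => by simpa using hP r z hz hz₀
  have h := congrArg (flipSum μ c k) hrec
  simp only [map_add, map_sub, map_smul, smul_eq_mul] at h
  rw [flipSum_succ, hS.A_zero]
  linear_combination h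

end OlverSolution

namespace Olver

variable {R : ℝ} {f : ℂ → ℂ} {μ : ℂ} {c : ℕ → ℂ} {Ap Bp Am Bm : ℕ → ℂ → ℂ}

lemma B_zero_eq_flipSum (hR : 0 < R) (hfe : ∀ z ∈ ball (0 : ℂ) R, f (-z) = f z)
    (hSp : OlverSolution (ball 0 R) f μ Ap Bp) (hSm : OlverSolution (ball 0 R) f (-μ) Am Bm) :
    EqOn (Bm 0) (fun w => flipSum μ c 0 fun r => Bp r w) (ball 0 R) := by
  simp only [flipSum_zero]
  refine eqOn_ball_of_deriv_eq hR (hSm.analB 0) (hSp.analB 0) (fun z hz hz₀ => ?_)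
    (by rw [hSm.B_apply_zero hR hfe, hSp.B_apply_zero hR hfe])
  have hm : 2 * deriv (Bm 0) z = olverOp f (-μ) (Am 0) z := hSm.recB 0 z hz hz₀
  have hp : 2 * deriv (Bp 0) z = olverOp f μ (Ap 0) z := hSp.recB 0 z hz hz₀
  rw [funext hSm.A_zero, olverOp_one] at hm
  rw [funext hSp.A_zero, olverOp_one] at hp
  linear_combination (hm - hp) / 2

lemma exists_const_A_succ_add_sub_flipSum (hR : 0 < R)
    (hSp : OlverSolution (ball 0 R) f μ Ap Bp) (hSm : OlverSolution (ball 0 R) f (-μ) Am Bm)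
    {k : ℕ} (hB : EqOn (Bm k) (fun w => flipSum μ c k fun r => Bp r w) (ball 0 R)) :
    ∃ C, ∀ z ∈ ball (0 : ℂ) R, z ≠ 0 →
      2 * (Am (k + 1) z + 2 * μ / z * Bm k z - flipSum μ c (k + 1) fun r => Ap r z) = C := by
  choose Pp hPpa hPp' hPprec using hSp.recA
  obtain ⟨Pm, hPma, hPm', hPmrec⟩ := hSm.recA k
  set G : ℂ → ℂ := fun w => Pm w - (flipSum μ c k fun r => Pp r w) - 4 * μ * c k
  have hGa : AnalyticOnNhd ℂ G (ball 0 R) :=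
    (hPma.sub (analyticOnNhd_flipSum hPpa)).sub analyticOnNhd_const
  have hG : ∀ z ∈ ball (0 : ℂ) R, G z = G 0 := by
    refine fun z hz => eqOn_ball_of_deriv_eq hR hGa analyticOnNhd_const (fun w hw _ => ?_) rfl hz
    have hPp'w : (fun r => deriv (Pp r) w) = f w • fun r => Bp r w :=
      funext fun r => by simp [hPp' r w hw]
    have hG' := ((hPma w hw).differentiableAt.hasDerivAt.fun_sub
      (hasDerivAt_flipSum (μ := μ) (c := c) (k := k) fun r =>
        (hPpa r w hw).differentiableAt.hasDerivAt)).sub_const (4 * μ * c k)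
    rw [hPp'w, map_smul, hPm' w hw, hB hw, smul_eq_mul, sub_self] at hG'
    rw [hG'.deriv, deriv_const]
  refine ⟨G 0, fun z hz hz₀ => ?_⟩
  have hB' : deriv (Bm k) z = flipSum μ c k fun r => deriv (Bp r) z := by
    rw [(hB.eventuallyEq_of_mem (isOpen_ball.mem_nhds hz)).deriv_eq,
      deriv_flipSum fun r => (hSp.analB r z hz).differentiableAt]
  rw [← hG z hz]
  linear_combination hPmrec z hz hz₀ - hSp.flipSum_recA hPprec k hz hz₀
    + ((2 * μ + 1) / z) * hB hz - hB'

lemma A_succ_add_eq_flipSum (hR : 0 < R) (hfe : ∀ z ∈ ball (0 : ℂ) R, f (-z) = f z)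
    (hSp : OlverSolution (ball 0 R) f μ Ap Bp) (hnormp : ∀ s, Ap (s + 1) 0 = 0)
    (hSm : OlverSolution (ball 0 R) f (-μ) Am Bm) (hnormm : ∀ s, Am (s + 1) 0 = 0) {k : ℕ}
    (hB : EqOn (Bm k) (fun w => flipSum μ c k fun r => Bp r w) (ball 0 R))
    (hc : c k = deriv (Bm k) 0) :
    ∀ z ∈ ball (0 : ℂ) R, z ≠ 0 →
      Am (k + 1) z + 2 * μ / z * Bm k z = flipSum μ c (k + 1) fun r => Ap r z := by
  obtain ⟨C, hC⟩ := exists_const_A_succ_add_sub_flipSum hR hSp hSm hB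
  have h₀ : (0 : ℂ) ∈ ball (0 : ℂ) R := mem_ball_self hR
  -- Off `0`, `hC` says `4μ · Bm k z / z = C - 2 (Am (k+1) z - flipSum … z)`; at `z → 0` the left
  -- side tends to `4μ c k` and the right side to `C + 4μ c k`.
  have hslope := deriv_eq_of_div_eq (g := fun z => 4 * μ * Bm k z)
    (h := fun z => C - 2 * (Am (k + 1) z - flipSum μ c (k + 1) fun r => Ap r z))
    ((hSm.analB k 0 h₀).differentiableAt.const_mul _)
    (by rw [hSm.B_apply_zero hR hfe, mul_zero])
    (continuousAt_const.sub (((hSm.analA (k + 1) 0 h₀).continuousAt.fun_sub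
      (analyticOnNhd_flipSum hSp.analA 0 h₀).continuousAt).const_mul 2))
    (by
      filter_upwards [mem_nhdsWithin_of_mem_nhds (ball_mem_nhds 0 hR), self_mem_nhdsWithin]
        with z hz hz₀
      rw [← hC z hz hz₀]
      field_simp
      ring)
  rw [deriv_const_mul _ (hSm.analB k 0 h₀).differentiableAt, hnormm,
    flipSum_succ_of_succ_eq_zero hnormp, hSp.A_zero, ← hc] at hslope
  intro z hz hz₀
  linear_combination (hC z hz hz₀ - hslope) / 2

lemma B_succ_eq_flipSum (hR : 0 < R) (hfe : ∀ z ∈ ball (0 : ℂ) R, f (-z) = f z)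
    (hSp : OlverSolution (ball 0 R) f μ Ap Bp) (hSm : OlverSolution (ball 0 R) f (-μ) Am Bm)
    {k : ℕ} (hA : ∀ z ∈ ball (0 : ℂ) R, z ≠ 0 →
      Am (k + 1) z + 2 * μ / z * Bm k z = flipSum μ c (k + 1) fun r => Ap r z) :
    EqOn (Bm (k + 1)) (fun w => flipSum μ c (k + 1) fun r => Bp r w) (ball 0 R) := by
  obtain ⟨Pm, hPma, hPm', hPmrec⟩ := hSm.recA k
  have hU : IsOpen (ball (0 : ℂ) R \ {0}) := isOpen_ball.sdiff isClosed_singleton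
  have hBp₀ : (fun r => Bp r 0) = 0 := funext (hSp.B_apply_zero hR hfe)
  refine eqOn_ball_of_deriv_eq hR (hSm.analB _) (analyticOnNhd_flipSum hSp.analB)
    (fun z hz hz₀ => mul_left_cancel₀ two_ne_zero ?_)
    (by rw [hSm.B_apply_zero hR hfe, hBp₀, map_zero])
  calc 2 * deriv (Bm (k + 1)) z = olverOp f (-μ) (Am (k + 1)) z := hSm.recB (k + 1) z hz hz₀
    _ = olverOp f μ (fun w => Am (k + 1) w + 2 * μ / w * Bm k w) z :=
      (olverOp_flip hU ((hSm.analA _).mono sdiff_subset) ((hSm.analB k).mono sdiff_subset)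
        (hPma.mono sdiff_subset) (fun w hw => hPmrec w hw.1 hw.2) (fun w hw => hPm' w hw.1)
        ⟨hz, hz₀⟩ hz₀).symm
    _ = olverOp f μ (fun w => flipSum μ c (k + 1) fun r => Ap r w) z :=
      olverOp_congr (by
        filter_upwards [eventually_mem_ball_ne_zero hz hz₀] with w hw using hA w hw.1 hw.2)
    _ = 2 * deriv (fun w => flipSum μ c (k + 1) fun r => Bp r w) z :=
      (hSp.flipSum_recB (k + 1) hz hz₀).symm

end Olver

open Olver

theorem olver_parameter_flip_formula_general (R : ℝ) (hR : 0 < R) (f : ℂ → ℂ) (μ : ℂ)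
    (hfe : ∀ z ∈ Metric.ball (0 : ℂ) R, f (-z) = f z)
    (Ap Bp Am Bm : ℕ → ℂ → ℂ)
    (hABp : OlverSolution (Metric.ball 0 R) f μ Ap Bp)
    (hnormp : ∀ s, Ap (s + 1) 0 = 0)
    (hABm : OlverSolution (Metric.ball 0 R) f (-μ) Am Bm)
    (hnormm : ∀ s, Am (s + 1) 0 = 0) :
    (∀ s, ∀ z ∈ Metric.ball (0 : ℂ) R,
      Bm s z = Bp s z +
        2 * μ * ∑ r ∈ Finset.range s, Bp r z * deriv (Bm (s - 1 - r)) 0) ∧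
    (∀ s, ∀ z ∈ Metric.ball (0 : ℂ) R, z ≠ 0 →
      Am (s + 1) z + (2 * μ / z) * Bm s z = Ap (s + 1) z +
        2 * μ * ∑ r ∈ Finset.range (s + 1), Ap r z * deriv (Bm (s - r)) 0) := by
  set c : ℕ → ℂ := fun k => deriv (Bm k) 0
  have hflip : ∀ s, EqOn (Bm s) (fun w => flipSum μ c s fun r => Bp r w) (ball 0 R) ∧
      ∀ z ∈ ball (0 : ℂ) R, z ≠ 0 →
        Am (s + 1) z + 2 * μ / z * Bm s z = flipSum μ c (s + 1) fun r => Ap r z := by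
    intro s
    induction s with
    | zero =>
      have hB := B_zero_eq_flipSum (c := c) hR hfe hABp hABm
      exact ⟨hB, A_succ_add_eq_flipSum hR hfe hABp hnormp hABm hnormm hB rfl⟩
    | succ s ih =>
      have hB := B_succ_eq_flipSum hR hfe hABp hABm ih.2
      exact ⟨hB, A_succ_add_eq_flipSum hR hfe hABp hnormp hABm hnormm hB rfl⟩
  refine ⟨fun s z hz => (hflip s).1 hz, fun s z hz hz₀ => ?_⟩
  rw [(hflip s).2 z hz hz₀, flipSum_apply, Nat.add_sub_cancel]

/-- Theorem 5.2 (second part) of the paper: with `A_s(±μ,·), B_s(±μ,·)` the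
normalized Olver solutions with parameters `μ` and `-μ`, the functions
`a_s(z) = A_s(-μ,z) + (2μ/z) B_{s-1}(-μ,z)` (for `s ≥ 1`) and `b_s(z) = B_s(-μ,z)`
satisfy `a_s(z) = A_s(μ,z) + 2μ ∑_{r=0}^{s-1} A_r(μ,z) B'_{s-1-r}(-μ,0)` and
`b_s(z) = B_s(μ,z) + 2μ ∑_{r=0}^{s-1} B_r(μ,z) B'_{s-1-r}(-μ,0)`. -/
theorem olver_parameter_flip_formula (R : ℝ) (hR : 0 < R) (f : ℂ → ℂ) (μ : ℂ)
    (hf : AnalyticOnNhd ℂ f (Metric.ball 0 R))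
    (hfe : ∀ z ∈ Metric.ball (0 : ℂ) R, f (-z) = f z)
    (Ap Bp Am Bm : ℕ → ℂ → ℂ)
    (hABp : OlverSolution (Metric.ball 0 R) f μ Ap Bp)
    (hnormp : ∀ s, Ap (s + 1) 0 = 0)
    (hABm : OlverSolution (Metric.ball 0 R) f (-μ) Am Bm)
    (hnormm : ∀ s, Am (s + 1) 0 = 0) :
    (∀ s, ∀ z ∈ Metric.ball (0 : ℂ) R,
      Bm s z = Bp s z +
        2 * μ * ∑ r ∈ Finset.range s, Bp r z * deriv (Bm (s - 1 - r)) 0) ∧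
    (∀ s, ∀ z ∈ Metric.ball (0 : ℂ) R, z ≠ 0 →
      Am (s + 1) z + (2 * μ / z) * Bm s z = Ap (s + 1) z +
        2 * μ * ∑ r ∈ Finset.range (s + 1), Ap r z * deriv (Bm (s - r)) 0) :=
  olver_parameter_flip_formula_general R hR f μ hfe Ap Bp Am Bm hABp hnormp hABm hnormm
end
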